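/- arXiv:2202.11695 — 2 statements merged into one kernel-verified Lean document; each statement's English description precedes it below -/
import Mathlib

section
/- Let L, J, K, m ∈ ℕ with K + 1 > 8·L·J and K ≥ 1. Let (a_n)_{n∈ℕ} be complex numbers with |a_n| ≤ Lⁿ for all n ≥ 1, and let f(z) = Σ_{n=0}^∞ (a_n/n!)·zⁿ (this series converges for every z ∈ ℂ). Let r_0,…,r_K be complex numbers with |a_n − r_n| ≤ 2^{−m} for all 0 ≤ n ≤ K. Then for every z ∈ ℂ with |z| ≤ J: |f(z) − Σ_{n=0}^{K} (r_n/n!)·zⁿ| ≤ 2^{2J−m} + 2^{−K}. -/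
open Complex Filter MeasureTheory
open scoped Real Topology Classical

/-- The actual bandwidth of `f`: `limsup_n |f⁽ⁿ⁾(0)|^(1/n)`. -/
noncomputable def bw (f : ℂ → ℂ) : ℝ :=
  Filter.limsup (fun n : ℕ => ‖iteratedDeriv n f 0‖ ^ ((n : ℝ)⁻¹)) Filter.atTop

/-- `r` is a description of the entire function `f` (via its Taylor coefficients at 0). -/
def IsDescription (r : ℕ × ℕ → ℚ × ℚ) (f : ℂ → ℂ) : Prop :=
  ∀ n m : ℕ,
    ‖iteratedDeriv n f 0 - (((r (n, m)).1 : ℂ) + ((r (n, m)).2 : ℂ) * Complex.I)‖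
      ≤ (2 : ℝ) ^ (-(m : ℤ))

/-- Membership in `CE_π`. -/
def MemCE (f : ℂ → ℂ) : Prop :=
  Differentiable ℂ f ∧ bw f ≤ Real.pi ∧ ∃ r : ℕ × ℕ → ℚ × ℚ, Computable r ∧ IsDescription r f

/-- Evaluation of the Gaussian-rational polynomial with coefficient list `c`. -/
noncomputable def polyEval (c : List (ℚ × ℚ)) (z : ℂ) : ℂ :=
  ((c.zipIdx.map Prod.swap).map fun p => (((p.2.1 : ℂ)) + (p.2.2 : ℂ) * Complex.I) * z ^ p.1).sum

/-- The natural number `e`, viewed as a code of a partial recursive function, computes the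
total function `g` (via the standard encodings). -/
def CodeComputes {α β : Type} [Primcodable α] [Primcodable β] (e : ℕ) (g : α → β) : Prop :=
  ∀ a : α, (Denumerable.ofNat Nat.Partrec.Code e).eval (Encodable.encode a) =
    Part.some (Encodable.encode (g a))

/-- `x` is a computable real number. -/
def ComputableReal (x : ℝ) : Prop :=
  ∃ r : ℕ → ℚ, Computable r ∧ ∀ m : ℕ, |x - (r m : ℝ)| ≤ (2 : ℝ) ^ (-(m : ℤ))

/-- The function `sinc_π` on the reals. -/
noncomputable def sincR (t : ℝ) : ℝ :=
  if t = 0 then 1 else Real.sin (Real.pi * t) / (Real.pi * t)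

/-- The elementary computable signal with coefficients `c k`, `k = -L, …, L`. -/
noncomputable def elemSignal (L : ℕ) (c : ℤ → ℚ × ℚ) (t : ℝ) : ℂ :=
  ∑ k ∈ Finset.Icc (-(L : ℤ)) (L : ℤ),
    (((c k).1 : ℂ) + ((c k).2 : ℂ) * Complex.I) * (sincR (t - k) : ℂ)

/-- Membership in `CB^p_π`. -/
def MemCB (p : ℝ) (f : ℂ → ℂ) : Prop :=
  Differentiable ℂ f ∧ bw f ≤ Real.pi ∧
    MemLp (fun t : ℝ => f t) (ENNReal.ofReal p) volume ∧
    ∃ (L : ℕ → ℕ) (c : ℕ → ℤ → ℚ × ℚ), Computable L ∧ Computable₂ c ∧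
      ∀ m : ℕ,
        eLpNorm (fun t : ℝ => f t - elemSignal (L m) (c m) t) (ENNReal.ofReal p) volume
          ≤ ENNReal.ofReal ((2 : ℝ) ^ (-(m : ℤ)))

/-! The difference splits into the coefficient errors of the first `K + 1` terms, of size at most
`2⁻ᵐ e^‖z‖ ≤ 2⁻ᵐ 4ᴶ`, and the tail of the series. A tail term is at most `x ^ n / n!` with
`x = L J`, and comparing with `e^(4x)` gives `x ^ n / n! ≤ e^(4x) / 4ⁿ ≤ 2⁻ⁿ` as soon as `8x ≤ n`,
so the tail is dominated by a geometric series. -/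

open Finset
open scoped Nat

lemma Real.exp_le_two_pow {y : ℝ} {k : ℕ} (h : 2 * y ≤ k) : Real.exp y ≤ 2 ^ k := by
  have hlog : (1 : ℝ) / 2 < Real.log 2 := lt_trans (by norm_num) Real.log_two_gt_d9
  calc Real.exp y ≤ Real.exp (k * Real.log 2) :=
        Real.exp_le_exp.mpr (by nlinarith [k.cast_nonneg (α := ℝ)])
    _ = 2 ^ k := by rw [Real.exp_nat_mul, Real.exp_log two_pos]

lemma Real.pow_div_factorial_le_inv_two_pow {x : ℝ} {n : ℕ} (hx : 0 ≤ x) (hn : 8 * x ≤ n) :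
    x ^ n / n ! ≤ 2⁻¹ ^ n := by
  calc x ^ n / n ! = (4 * x) ^ n / n ! / 4 ^ n := by rw [mul_pow]; field_simp
    _ ≤ Real.exp (4 * x) / 4 ^ n := by
        gcongr; exact Real.pow_div_factorial_le_exp _ (by positivity) n
    _ ≤ 2 ^ n / 4 ^ n := by gcongr; exact Real.exp_le_two_pow (by linarith)
    _ = 2⁻¹ ^ n := by rw [← div_pow]; norm_num

section Normed

variable {E : Type*} [NormedAddCommGroup E] {f : ℕ → E} {N : ℕ}

lemma summable_of_norm_le_inv_two_pow [CompleteSpace E] (hf : ∀ n, N ≤ n → ‖f n‖ ≤ 2⁻¹ ^ n) :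
    Summable f :=
  (summable_geometric_of_lt_one (by norm_num) (by norm_num)).of_norm_bounded_eventually_nat
    (Filter.eventually_atTop.mpr ⟨N, hf⟩)

lemma norm_tsum_nat_add_le_of_norm_le_inv_two_pow (hf : ∀ n, N ≤ n → ‖f n‖ ≤ 2⁻¹ ^ n) :
    ‖∑' n, f (n + N)‖ ≤ 2 * 2⁻¹ ^ N := by
  have hgeom : HasSum (fun n : ℕ => (2⁻¹ : ℝ) ^ (n + N)) (2 * 2⁻¹ ^ N) := by
    simpa [pow_add] using (hasSum_geometric_two.mul_right ((2⁻¹ : ℝ) ^ N))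
  exact tsum_of_norm_bounded hgeom fun n => hf (n + N) (Nat.le_add_left N n)

end Normed

section Series

variable {𝕜 : Type*} [RCLike 𝕜]

lemma norm_div_factorial_mul_pow_le {c z : 𝕜} {C R : ℝ} (n : ℕ) (hc : ‖c‖ ≤ C) (hz : ‖z‖ ≤ R) :
    ‖c / n ! * z ^ n‖ ≤ C * (R ^ n / n !) := by
  rw [norm_mul, norm_div, norm_pow, RCLike.norm_natCast, div_mul_eq_mul_div, mul_div_assoc]
  gcongr
  exact (norm_nonneg c).trans hc

lemma norm_sum_div_factorial_mul_pow_le {c : ℕ → 𝕜} {ε : ℝ} {N : ℕ}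
    (hε : 0 ≤ ε) (hc : ∀ n < N, ‖c n‖ ≤ ε) (z : 𝕜) :
    ‖∑ n ∈ range N, c n / n ! * z ^ n‖ ≤ ε * Real.exp ‖z‖ := by
  calc ‖∑ n ∈ range N, c n / n ! * z ^ n‖
      ≤ ∑ n ∈ range N, ε * (‖z‖ ^ n / n !) :=
        (norm_sum_le _ _).trans <| sum_le_sum fun n hn =>
          norm_div_factorial_mul_pow_le n (hc n (mem_range.mp hn)) le_rfl
    _ ≤ ε * Real.exp ‖z‖ := by
        rw [← mul_sum]; gcongr; exact Real.sum_le_exp_of_nonneg (norm_nonneg z) N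

end Series

theorem stmt2_general (L J K m : ℕ) (hK : 8 * L * J < K + 1)
    (a : ℕ → ℂ) (ha : ∀ n : ℕ, 1 ≤ n → ‖a n‖ ≤ (L : ℝ) ^ n)
    (r : ℕ → ℂ) (hr : ∀ n : ℕ, n ≤ K → ‖a n - r n‖ ≤ (2 : ℝ) ^ (-(m : ℤ)))
    (z : ℂ) (hz : ‖z‖ ≤ J) :
    ‖(∑' n : ℕ, a n / (n.factorial : ℂ) * z ^ n)
        - ∑ n ∈ Finset.range (K + 1), r n / (n.factorial : ℂ) * z ^ n‖
      ≤ (2 : ℝ) ^ ((2 * (J : ℤ)) - (m : ℤ)) + (2 : ℝ) ^ (-(K : ℤ)) := by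
  set term : ℕ → ℂ := fun n => a n / n ! * z ^ n
  have hLJ : 8 * ((L : ℝ) * J) ≤ K + 1 := by exact_mod_cast (mul_assoc 8 L J ▸ hK.le)
  have htail : ∀ n, K + 1 ≤ n → ‖term n‖ ≤ 2⁻¹ ^ n := fun n hn => by
    have h := norm_div_factorial_mul_pow_le n (ha n (by omega)) hz
    rw [← mul_div_assoc, ← mul_pow] at h
    exact h.trans (Real.pow_div_factorial_le_inv_two_pow (by positivity)
      (hLJ.trans (by exact_mod_cast hn)))
  have hsplit : (∑' n, term n) - ∑ n ∈ range (K + 1), r n / n ! * z ^ n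
      = (∑ n ∈ range (K + 1), (a n - r n) / n ! * z ^ n) + ∑' n, term (n + (K + 1)) := by
    rw [← (summable_of_norm_le_inv_two_pow htail).sum_add_tsum_nat_add (K + 1)]
    simp only [term, sub_div, sub_mul, sum_sub_distrib]
    ring
  have hpow : (2 : ℝ) ^ (2 * (J : ℤ) - m) = 2 ^ (-(m : ℤ)) * 2 ^ (2 * J) := by
    rw [show 2 * (J : ℤ) - m = -m + (2 * J : ℕ) by push_cast; ring, zpow_add₀ two_ne_zero,
      zpow_natCast]
  have hpowK : (2 : ℝ) ^ (-(K : ℤ)) = 2 * 2⁻¹ ^ (K + 1) := by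
    rw [zpow_neg, zpow_natCast, inv_pow, pow_succ]
    field_simp
  rw [hsplit, hpow, hpowK]
  calc _ ≤ ‖∑ n ∈ range (K + 1), (a n - r n) / n ! * z ^ n‖ + ‖∑' n, term (n + (K + 1))‖ :=
        norm_add_le _ _
    _ ≤ 2 ^ (-(m : ℤ)) * Real.exp ‖z‖ + 2 * 2⁻¹ ^ (K + 1) :=
        add_le_add (norm_sum_div_factorial_mul_pow_le (by positivity)
          (fun n hn => hr n (by omega)) z) (norm_tsum_nat_add_le_of_norm_le_inv_two_pow htail)
    _ ≤ 2 ^ (-(m : ℤ)) * 2 ^ (2 * J) + 2 * 2⁻¹ ^ (K + 1) := by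
        gcongr; exact Real.exp_le_two_pow (by push_cast; linarith)

theorem stmt2 (L J K m : ℕ) (hK : 8 * L * J < K + 1) (hK1 : 1 ≤ K)
    (a : ℕ → ℂ) (ha : ∀ n : ℕ, 1 ≤ n → ‖a n‖ ≤ (L : ℝ) ^ n)
    (r : ℕ → ℂ) (hr : ∀ n : ℕ, n ≤ K → ‖a n - r n‖ ≤ (2 : ℝ) ^ (-(m : ℤ)))
    (z : ℂ) (hz : ‖z‖ ≤ J) :
    ‖(∑' n : ℕ, a n / (n.factorial : ℂ) * z ^ n)
        - ∑ n ∈ Finset.range (K + 1), r n / (n.factorial : ℂ) * z ^ n‖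
      ≤ (2 : ℝ) ^ ((2 * (J : ℤ)) - (m : ℤ)) + (2 : ℝ) ^ (-(K : ℤ)) :=
  stmt2_general L J K m hK a ha r hr z hz
end

section
/- (Order-2 case of the lemma that an n-th order upper Zheng–Weihrauch description implies membership in Π_n.) Let x : ℕ×ℕ → ℝ be a computable double sequence of computable reals, i.e. there is a computable ρ : ℕ×ℕ×ℕ → ℚ with |x(m,k) − ρ(m,k,s)| ≤ 2^{−s} for all m, k, s. Assume that for each m the set {x(m,k) : k ∈ ℕ} is bounded above and that x* := inf_{m∈ℕ} sup_{k∈ℕ} x(m,k) is a real number (the infimum is finite). Then there exists a computable ρ' : ℕ×ℕ → ℚ such that for every m the set {ρ'(m,k) : k ∈ ℕ} is bounded above and x* = inf_{m∈ℕ} sup_{k∈ℕ} ρ'(m,k). -/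
open Complex Filter MeasureTheory
open scoped Real Topology Classical

/-
Lowering each approximation `ρ (m, k, s)` by its error bound `2⁻ˢ` gives rationals below
`x (m, k)` that converge to it, so every row has the same supremum as the corresponding row of `x`.
The computational content is that subtraction of rationals is computable for the `Denumerable`
encoding of `ℚ`. It reduces to primitive recursive integer arithmetic once numerator and
denominator are known, and reading these off a code takes an unbounded search for the `n`-th valid
numerator–denominator code.
-/

open Encodable Denumerable

namespace Primrec

theorem nat_dvd : PrimrecRel ((· ∣ ·) : ℕ → ℕ → Prop) :=
  (Primrec.eq.comp (nat_mod.comp snd fst) (const 0)).of_eq fun _ => Nat.dvd_iff_mod_eq_zero.symm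

theorem nat_gcd : Primrec₂ Nat.gcd := by
  have hdvd : PrimrecRel fun (p : ℕ × ℕ) d => d ∣ p.1 ∧ d ∣ p.2 :=
    (nat_dvd.comp snd (fst.comp fst)).and (nat_dvd.comp snd (snd.comp fst))
  refine (nat_findGreatest (nat_add.comp fst snd) hdvd).of_eq fun ⟨a, b⟩ => ?_
  refine Nat.findGreatest_eq_iff.2
    ⟨?_, fun _ => ⟨Nat.gcd_dvd_left a b, Nat.gcd_dvd_right a b⟩, fun d hlt hle hd => ?_⟩
  · rcases Nat.eq_zero_or_pos a with rfl | ha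
    · simp
    · exact (Nat.gcd_le_left b ha).trans (Nat.le_add_right a b)
  · have hpos : 0 < Nat.gcd a b := by
      by_contra h
      simp only [not_lt, nonpos_iff_eq_zero, Nat.gcd_eq_zero_iff] at h
      omega
    exact absurd (Nat.le_of_dvd hpos (Nat.dvd_gcd hd.1 hd.2)) (not_le.2 hlt)

theorem nat_count {p : ℕ → Prop} [DecidablePred p] (hp : PrimrecPred p) :
    Primrec (Nat.count p) :=
  (list_length.comp (listFilter hp |>.comp list_range)).of_eq fun n => by
    simp [Nat.count, List.countP_eq_length_filter]

variable {α σ : Type*} [Primcodable α] [Primcodable σ]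

theorem intEquivNatSumNat : Primrec Equiv.intEquivNatSumNat :=
  encode_iff.1 (Primrec.encode.of_eq fun z => by cases z <;> rfl)

theorem int_casesOn {f : α → ℤ} {g h : α → ℕ → σ} (hf : Primrec f) (hg : Primrec₂ g)
    (hh : Primrec₂ h) : Primrec fun a => Int.casesOn (motive := fun _ => σ) (f a) (g a) (h a) :=
  (sumCasesOn (intEquivNatSumNat.comp hf) hg hh).of_eq fun a => by cases f a <;> rfl

theorem int_ofNat : Primrec Int.ofNat :=
  encode_iff.1 (nat_double.of_eq fun _ => rfl)

theorem int_negSucc : Primrec Int.negSucc :=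
  encode_iff.1 (nat_double_succ.of_eq fun _ => rfl)

theorem int_toNat : Primrec Int.toNat :=
  (int_casesOn .id Primrec₂.right (Primrec₂.const 0)).of_eq fun z => by cases z <;> rfl

theorem int_natAbs : Primrec Int.natAbs :=
  (int_casesOn .id Primrec₂.right (succ.comp₂ Primrec₂.right)).of_eq fun z => by
    cases z <;> rfl

theorem int_neg : Primrec (Neg.neg : ℤ → ℤ) := by
  have hofNat : Primrec₂ fun (_ : ℤ) (n : ℕ) => -(n : ℤ) :=
    (ite (Primrec.eq.comp snd (const 0)) (const 0)
      (int_negSucc.comp (nat_sub.comp snd (const 1)))).of_eq fun ⟨_, n⟩ => by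
        rcases n with _ | n <;> rfl
  exact (int_casesOn .id hofNat (int_ofNat.comp₂ (succ.comp₂ Primrec₂.right))).of_eq
    fun z => by cases z <;> rfl

theorem int_subNatNat : Primrec₂ Int.subNatNat :=
  (ite (nat_le.comp snd fst) (int_ofNat.comp (nat_sub.comp fst snd))
    (int_negSucc.comp (nat_sub.comp (nat_sub.comp snd fst) (const 1)))).of_eq fun ⟨m, n⟩ => by
      simp only [Int.subNatNat]
      split_ifs with h
      · simp [Nat.sub_eq_zero_of_le h]
      · obtain ⟨k, hk⟩ : ∃ k, n - m = k + 1 := ⟨n - m - 1, by omega⟩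
        simp [hk]

theorem int_toNat_neg : Primrec fun z : ℤ => (-z).toNat :=
  int_toNat.comp int_neg

theorem int_sub : Primrec₂ ((· - ·) : ℤ → ℤ → ℤ) :=
  (int_subNatNat.comp (nat_add.comp (int_toNat.comp fst) (int_toNat_neg.comp snd))
    (nat_add.comp (int_toNat_neg.comp fst) (int_toNat.comp snd))).of_eq fun ⟨z, w⟩ => by
      have hz := Int.toNat_sub_toNat_neg z
      have hw := Int.toNat_sub_toNat_neg w
      simp only [Int.subNatNat_eq_coe]
      push_cast
      linarith

theorem int_mul : Primrec₂ ((· * ·) : ℤ → ℤ → ℤ) := by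
  have hprod {f g : ℤ → ℕ} (hf : Primrec f) (hg : Primrec g) :
      Primrec₂ fun z w : ℤ => f z * g w :=
    nat_mul.comp (hf.comp fst) (hg.comp snd)
  refine (int_subNatNat.comp
    (nat_add.comp (hprod int_toNat int_toNat) (hprod int_toNat_neg int_toNat_neg))
    (nat_add.comp (hprod int_toNat int_toNat_neg) (hprod int_toNat_neg int_toNat))).of_eq
      fun ⟨z, w⟩ => ?_
  have hz := (Int.toNat_sub_toNat_neg z).symm
  have hw := (Int.toNat_sub_toNat_neg w).symm
  simp only [Int.subNatNat_eq_coe]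
  push_cast
  linear_combination (-w) * hz - (((z.toNat : ℤ)) - ((-z).toNat : ℤ)) * hw

theorem int_ediv_natCast : Primrec₂ fun (z : ℤ) (n : ℕ) => z / (n : ℤ) := by
  have hneg :
      Primrec₂ fun (p : ℤ × ℕ) (m : ℕ) => if p.2 = 0 then 0 else Int.negSucc (m / p.2) :=
    ite (Primrec.eq.comp (snd.comp fst) (const 0)) (const 0)
      (int_negSucc.comp (nat_div.comp snd (snd.comp fst)))
  have hnonneg : Primrec₂ fun (p : ℤ × ℕ) (m : ℕ) => Int.ofNat (m / p.2) :=
    int_ofNat.comp₂ (nat_div.comp₂ Primrec₂.right (snd.comp₂ Primrec₂.left))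
  refine (int_casesOn fst hnonneg hneg).of_eq fun ⟨z, n⟩ => ?_
  rcases z with m | m <;> rcases n with _ | n <;> rfl

end Primrec

theorem Computable.nat_nth {p : ℕ → Prop} [DecidablePred p] (hp : PrimrecPred p)
    (hinf : (Set.ofPred p).Infinite) : Computable (Nat.nth p) := by
  have hgraph : Primrec₂ fun n y => decide (p y ∧ Nat.count p y = n) :=
    PrimrecPred.decide ((hp.comp Primrec.snd).and
      (Primrec.eq.comp ((Primrec.nat_count hp).comp Primrec.snd) Primrec.fst))
  refine (Partrec.rfind hgraph.to_comp.partrec₂).of_eq_tot fun n =>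
    Nat.mem_rfind.2 ⟨?_, fun {m} hm => ?_⟩
  · simpa using ⟨Nat.nth_mem_of_infinite hinf n, Nat.count_nth_of_infinite hinf n⟩
  · simp only [PFun.coe_val, Part.mem_some_iff, Bool.false_eq, decide_eq_false_iff_not, not_and]
    intro hpm hcount
    exact (Nat.count_strict_mono hpm hm).ne (hcount.trans (Nat.count_nth_of_infinite hinf n).symm)

namespace Rat

/- `Rat.instEncodable` sends `q` to `Nat.pair (encode q.num) q.den`, whereas the `Denumerable`
(hence `Primcodable`) encoding of `ℚ` numbers these codes in increasing order: it sends `q` to the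
number of codes below `Nat.pair (encode q.num) q.den`. -/
def IsNumDenCode (y : ℕ) : Prop :=
  0 < y.unpair.2 ∧ (ofNat ℤ y.unpair.1).natAbs.Coprime y.unpair.2

instance : DecidablePred IsNumDenCode := fun _ => inferInstanceAs (Decidable (_ ∧ _))

theorem primrecPred_isNumDenCode : PrimrecPred IsNumDenCode :=
  (Primrec.nat_lt.comp (.const 0) (Primrec.snd.comp .unpair)).and
    (Primrec.eq.comp (Primrec.nat_gcd.comp (Primrec.int_natAbs.comp
      ((Primrec.ofNat ℤ).comp (Primrec.fst.comp .unpair))) (Primrec.snd.comp .unpair)) (.const 1))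

theorem isNumDenCode_iff {y : ℕ} :
    IsNumDenCode y ↔ ∃ q : ℚ, Nat.pair (encode q.num) q.den = y := by
  constructor
  · rintro ⟨hd, hcop⟩
    exact ⟨⟨_, _, hd.ne', hcop⟩, by simp only [Denumerable.encode_ofNat, Nat.pair_unpair]⟩
  · rintro ⟨q, rfl⟩
    simpa only [IsNumDenCode, Nat.unpair_pair, Denumerable.ofNat_encode] using
      ⟨q.pos, q.reduced⟩

theorem count_isNumDenCode_ofNat (n : ℕ) :
    Nat.count IsNumDenCode (Nat.pair (encode (ofNat ℚ n).num) (ofNat ℚ n).den) = n := by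
  conv_rhs => rw [← Denumerable.encode_ofNat (α := ℚ) n]
  exact List.countP_congr fun y _ => by
    simp only [decide_eq_true_eq, isNumDenCode_iff, Set.mem_range]
    rfl

theorem ofNat_count_isNumDenCode (q : ℚ) :
    ofNat ℚ (Nat.count IsNumDenCode (Nat.pair (encode q.num) q.den)) = q := by
  obtain ⟨n, rfl⟩ : ∃ n, ofNat ℚ n = q := ⟨_, ofNat_encode q⟩
  exact congrArg (ofNat ℚ) (count_isNumDenCode_ofNat n)

theorem infinite_isNumDenCode : (Set.ofPred IsNumDenCode).Infinite :=
  Set.infinite_of_injective_forall_mem (f := fun q : ℚ => Nat.pair (encode q.num) q.den)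
    (fun q r h => by simp only [Nat.pair_eq_pair, encode_inj] at h; exact Rat.ext h.1 h.2)
    fun q => isNumDenCode_iff.2 ⟨q, rfl⟩

end Rat

theorem Computable.rat_numDen : Computable fun q : ℚ => (q.num, q.den) := by
  have hcode : Computable fun q : ℚ => Nat.pair (encode q.num) q.den :=
    ((Computable.nat_nth Rat.primrecPred_isNumDenCode Rat.infinite_isNumDenCode).comp
      Computable.encode).of_eq fun q => by
        obtain ⟨n, rfl⟩ : ∃ n, ofNat ℚ n = q := ⟨_, ofNat_encode q⟩
        rw [Denumerable.encode_ofNat]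
        conv_lhs => rw [← Rat.count_isNumDenCode_ofNat n]
        exact Nat.nth_count (Rat.isNumDenCode_iff.2 ⟨_, rfl⟩)
  have hunpair := Primrec.unpair.to_comp.comp hcode
  exact (((Computable.ofNat ℤ).comp (Computable.fst.comp hunpair)).pair
    (Computable.snd.comp hunpair)).of_eq fun q => by
      simp only [Nat.unpair_pair]
      exact Prod.ext (ofNat_encode q.num) rfl

theorem Primrec.rat_mkRat : Primrec₂ mkRat := by
  have hgcd : Primrec₂ fun (n : ℤ) (d : ℕ) => d.gcd n.natAbs :=
    nat_gcd.comp snd (int_natAbs.comp fst)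
  have hnum : Primrec₂ fun (n : ℤ) (d : ℕ) => (mkRat n d).num :=
    (ite (Primrec.eq.comp snd (const 0)) (const 0) (int_ediv_natCast.comp fst hgcd)).of_eq
      fun p => (Rat.num_mkRat p.1 p.2).symm
  have hden : Primrec₂ fun (n : ℤ) (d : ℕ) => (mkRat n d).den :=
    (ite (Primrec.eq.comp snd (const 0)) (const 1) (nat_div.comp snd hgcd)).of_eq
      fun p => (Rat.den_mkRat p.1 p.2).symm
  exact ((Primrec.ofNat ℚ).comp ((nat_count Rat.primrecPred_isNumDenCode).comp
    (Primrec₂.natPair.comp (Primrec.encode.comp hnum) hden))).of_eq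
      fun p => Rat.ofNat_count_isNumDenCode _

theorem Computable.rat_sub : Computable₂ ((· - ·) : ℚ → ℚ → ℚ) := by
  have hnum : Computable Rat.num := Computable.fst.comp Computable.rat_numDen
  have hden : Computable Rat.den := Computable.snd.comp Computable.rat_numDen
  have hden' : Computable fun q : ℚ => (q.den : ℤ) := Primrec.int_ofNat.to_comp.comp hden
  have hmul := Primrec.int_mul.to_comp
  exact (Primrec.rat_mkRat.to_comp.comp
    (Primrec.int_sub.to_comp.comp (hmul.comp (hnum.comp fst) (hden'.comp snd))
      (hmul.comp (hnum.comp snd) (hden'.comp fst)))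
    (Primrec.nat_mul.to_comp.comp (hden.comp fst) (hden.comp snd))).of_eq
      fun p => (Rat.sub_def' p.1 p.2).symm

theorem Primrec.rat_inv_two_pow : Primrec fun s : ℕ => ((2 : ℚ) ^ s)⁻¹ :=
  (rat_mkRat.comp (const 1) ((Primrec₂.unpaired'.1 Nat.Primrec.pow).comp (const 2) .id)).of_eq
    fun s => by simp [Rat.mkRat_eq_div]

section LowerApproximation

variable {ι : Type*} {y : ι → ℝ} {r : ι → ℕ → ℝ} {δ : ℕ → ℝ}

theorem bddAbove_range_sub_of_abs_sub_le (hy : BddAbove (Set.range y))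
    (hr : ∀ i s, |y i - r i s| ≤ δ s) :
    BddAbove (Set.range fun p : ι × ℕ => r p.1 p.2 - δ p.2) := by
  obtain ⟨b, hb⟩ := hy
  refine ⟨b, ?_⟩
  rintro _ ⟨⟨i, s⟩, rfl⟩
  have := (abs_le.1 (hr i s)).1
  linarith [hb ⟨i, rfl⟩]

theorem ciSup_sub_eq_of_abs_sub_le [Nonempty ι] (hy : BddAbove (Set.range y))
    (hr : ∀ i s, |y i - r i s| ≤ δ s) (hδ : Tendsto δ atTop (𝓝 0)) :
    ⨆ p : ι × ℕ, (r p.1 p.2 - δ p.2) = ⨆ i, y i := by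
  have hbdd := bddAbove_range_sub_of_abs_sub_le hy hr
  refine le_antisymm (ciSup_le fun ⟨i, s⟩ => ?_) (ciSup_le fun i => ?_)
  · have := (abs_le.1 (hr i s)).1
    linarith [le_ciSup hy i]
  · have hlim : Tendsto (fun s => (⨆ p : ι × ℕ, (r p.1 p.2 - δ p.2)) + 2 * δ s) atTop
        (𝓝 (⨆ p : ι × ℕ, (r p.1 p.2 - δ p.2))) := by
      simpa using tendsto_const_nhds.add (hδ.const_mul 2)
    refine ge_of_tendsto hlim (.of_forall fun s => ?_)
    have := (abs_le.1 (hr i s)).2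
    linarith [le_ciSup hbdd (i, s)]

end LowerApproximation

theorem stmt16_general (x : ℕ × ℕ → ℝ) (ρ : ℕ × ℕ × ℕ → ℚ) (hρ : Computable ρ)
    (happ : ∀ m k s : ℕ, |x (m, k) - (ρ (m, k, s) : ℝ)| ≤ (2 : ℝ) ^ (-(s : ℤ)))
    (hb : ∀ m : ℕ, BddAbove (Set.range fun k : ℕ => x (m, k))) :
    ∃ ρ' : ℕ × ℕ → ℚ, Computable ρ' ∧
      (∀ m : ℕ, BddAbove (Set.range fun k : ℕ => (ρ' (m, k) : ℝ))) ∧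
      (⨅ m : ℕ, ⨆ k : ℕ, x (m, k)) = ⨅ m : ℕ, ⨆ k : ℕ, (ρ' (m, k) : ℝ) := by
  have hδ : Tendsto (fun s : ℕ => (2 : ℝ) ^ (-(s : ℤ))) atTop (𝓝 0) := by
    simpa [zpow_neg, Function.comp_def] using
      tendsto_inv_atTop_zero.comp (tendsto_pow_atTop_atTop_of_one_lt one_lt_two)
  set ρ' : ℕ × ℕ → ℚ := fun p =>
    ρ (p.1, p.2.unpair.1, p.2.unpair.2) - (2 ^ p.2.unpair.2)⁻¹
  have hρ' (m : ℕ) : (fun k => (ρ' (m, k) : ℝ)) =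
      (fun p : ℕ × ℕ => (ρ (m, p.1, p.2) : ℝ) - 2 ^ (-(p.2 : ℤ))) ∘ Nat.unpair := by
    ext k
    simp [ρ', zpow_neg]
  refine ⟨ρ', ?_, fun m => ?_, iInf_congr fun m => ?_⟩
  · have hu : Computable fun p : ℕ × ℕ => p.2.unpair := Primrec.unpair.to_comp.comp .snd
    exact Computable.rat_sub.comp (hρ.comp (Computable.fst.pair hu))
      (Primrec.rat_inv_two_pow.to_comp.comp (Computable.snd.comp hu))
  · rw [hρ', Nat.surjective_unpair.range_comp]
    exact bddAbove_range_sub_of_abs_sub_le (hb m) (happ m)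
  · rw [hρ']
    exact ((Nat.surjective_unpair.iSup_comp _).trans
      (ciSup_sub_eq_of_abs_sub_le (hb m) (happ m) hδ)).symm

theorem stmt16 (x : ℕ × ℕ → ℝ) (ρ : ℕ × ℕ × ℕ → ℚ) (hρ : Computable ρ)
    (happ : ∀ m k s : ℕ, |x (m, k) - (ρ (m, k, s) : ℝ)| ≤ (2 : ℝ) ^ (-(s : ℤ)))
    (hb : ∀ m : ℕ, BddAbove (Set.range fun k : ℕ => x (m, k)))
    (hbelow : BddBelow (Set.range fun m : ℕ => ⨆ k : ℕ, x (m, k))) :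
    ∃ ρ' : ℕ × ℕ → ℚ, Computable ρ' ∧
      (∀ m : ℕ, BddAbove (Set.range fun k : ℕ => (ρ' (m, k) : ℝ))) ∧
      (⨅ m : ℕ, ⨆ k : ℕ, x (m, k)) = ⨅ m : ℕ, ⨆ k : ℕ, (ρ' (m, k) : ℝ) :=
  stmt16_general x ρ hρ happ hb
end
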